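/- arXiv:0807.1429 — 2 statements merged into one kernel-verified Lean document; each statement's English description precedes it below -/
import Mathlib

section
/- For every integer n ≥ 2, one has sqrt(2(n^3 - n)/π) · 4/(n+2)^2 · ((n-2)/(n+2))^((n-2)/2) ≤ sqrt(32/(π(n+2))). In particular this quantity tends to 0 as n → ∞. -/
/-!
The factor `((n-2)/(n+2))^((n-2)/2)` is at most `1`, and squaring the remaining factor turns the
inequality into `n³ - n ≤ (n+2)³`. The bound `√(32/(π(n+2)))` tends to `0`, which gives the limit
by squeezing.
-/

open Filter Topology Real

noncomputable section

/-- `√(2(n³-n)/π) · max_{0≤r<1} (1-r²)² r^(n-2)/4`; the maximum is attained at `r² = (n-2)/(n+2)`. -/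
def beltramiSupNorm (x : ℝ) : ℝ :=
  √(2 * (x ^ 3 - x) / π) * (4 / (x + 2) ^ 2) * ((x - 2) / (x + 2)) ^ ((x - 2) / 2)

lemma sqrt_mul_four_div_sq_le {x : ℝ} (hx : -2 < x) :
    √(2 * (x ^ 3 - x) / π) * (4 / (x + 2) ^ 2) ≤ √(32 / (π * (x + 2))) := by
  have hx2 : 0 < x + 2 := by linarith
  have hcube : (x ^ 3 - x) / (x + 2) ^ 3 ≤ 1 := by
    rw [div_le_one (by positivity)]
    nlinarith [sq_nonneg (x + 13 / 12)]
  have hsq : 2 * (x ^ 3 - x) / π * (4 / (x + 2) ^ 2) ^ 2 =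
      32 / (π * (x + 2)) * ((x ^ 3 - x) / (x + 2) ^ 3) := by
    field_simp
    ring
  calc √(2 * (x ^ 3 - x) / π) * (4 / (x + 2) ^ 2)
      = √(2 * (x ^ 3 - x) / π * (4 / (x + 2) ^ 2) ^ 2) := by
        rw [Real.sqrt_mul' _ (by positivity), Real.sqrt_sq (by positivity)]
    _ ≤ √(32 / (π * (x + 2))) := by
        rw [hsq]
        exact Real.sqrt_le_sqrt (mul_le_of_le_one_right (by positivity) hcube)

lemma beltramiSupNorm_nonneg {x : ℝ} (hx : 2 ≤ x) : 0 ≤ beltramiSupNorm x := by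
  have hbase : 0 ≤ (x - 2) / (x + 2) := div_nonneg (by linarith) (by linarith)
  unfold beltramiSupNorm
  have : 0 ≤ 4 / (x + 2) ^ 2 := by positivity
  positivity

lemma beltramiSupNorm_le {x : ℝ} (hx : 2 ≤ x) :
    beltramiSupNorm x ≤ √(32 / (π * (x + 2))) := by
  have hbase : 0 ≤ (x - 2) / (x + 2) := div_nonneg (by linarith) (by linarith)
  have hpow : ((x - 2) / (x + 2)) ^ ((x - 2) / 2) ≤ 1 :=
    Real.rpow_le_one hbase ((div_le_one (by linarith)).2 (by linarith)) (by linarith)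
  calc beltramiSupNorm x ≤ √(2 * (x ^ 3 - x) / π) * (4 / (x + 2) ^ 2) :=
        mul_le_of_le_one_right (by positivity) hpow
    _ ≤ √(32 / (π * (x + 2))) := sqrt_mul_four_div_sq_le (by linarith)

lemma tendsto_sqrt_div_pi_mul_add_atTop (c a : ℝ) :
    Tendsto (fun x : ℝ ↦ √(c / (π * (x + a)))) atTop (𝓝 0) := by
  have h : Tendsto (fun x : ℝ ↦ c / (π * (x + a))) atTop (𝓝 0) :=
    tendsto_const_nhds.div_atTop
      ((tendsto_atTop_add_const_right _ a tendsto_id).const_mul_atTop pi_pos)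
  simpa only [Real.sqrt_zero] using h.sqrt

lemma tendsto_beltramiSupNorm_atTop : Tendsto beltramiSupNorm atTop (𝓝 0) :=
  tendsto_of_tendsto_of_tendsto_of_le_of_le' tendsto_const_nhds
    (tendsto_sqrt_div_pi_mul_add_atTop 32 2)
    ((eventually_ge_atTop 2).mono fun _ ↦ beltramiSupNorm_nonneg)
    ((eventually_ge_atTop 2).mono fun _ ↦ beltramiSupNorm_le)

end

/-- For every integer `n ≥ 2`,
`√(2(n³-n)/π) * 4/(n+2)² * ((n-2)/(n+2))^((n-2)/2) ≤ √(32/(π(n+2)))`,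
and this quantity tends to `0` as `n → ∞`. -/
theorem stmt_1 :
    (∀ n : ℕ, 2 ≤ n →
      Real.sqrt (2 * ((n : ℝ) ^ 3 - n) / Real.pi) * (4 / ((n : ℝ) + 2) ^ 2) *
          (((n : ℝ) - 2) / ((n : ℝ) + 2)) ^ (((n : ℝ) - 2) / 2) ≤
        Real.sqrt (32 / (Real.pi * ((n : ℝ) + 2)))) ∧
    Tendsto (fun n : ℕ =>
      Real.sqrt (2 * ((n : ℝ) ^ 3 - n) / Real.pi) * (4 / ((n : ℝ) + 2) ^ 2) *
        (((n : ℝ) - 2) / ((n : ℝ) + 2)) ^ (((n : ℝ) - 2) / 2)) atTop (nhds 0) :=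
  ⟨fun n hn ↦ beltramiSupNorm_le (by exact_mod_cast hn),
    tendsto_beltramiSupNorm_atTop.comp tendsto_natCast_atTop_atTop⟩
end

section
/- Let q be a holomorphic function on the unit disc 𝔻 with Taylor expansion q(z) = Σ_{n≥2} (n^3 - n) a_n z^{n-2}. Then for any R ∈ (0,1), ∫∫_{|z|<R} |q(z)|^2 (1-|z|^2)^2/4 d²z ≥ (4π/3) |3 a_2/2|^2 (1 - (1 - R^2)^3). -/
/-!
Put `w(z) = (1 - |z|²)² / 4` and `c₀ = q(0) = 6 a₂`, so that `(3 a₂ / 2)² = c₀² / 16`.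
Since `w` is radial, rotating `z ↦ e^{iπ/n} z` shows `∫_{|z|<R} zⁿ w = 0` for `n ≥ 1`, and
integrating the Taylor series of `q` term by term gives the mean value identity
`∫_{|z|<R} q w = c₀ ∫_{|z|<R} w`. Expanding `0 ≤ ∫_{|z|<R} |q - c₀|² w` then yields
`|c₀|² ∫_{|z|<R} w ≤ ∫_{|z|<R} |q|² w`, and `∫_{|z|<R} w = π (1 - (1 - R²)³) / 12`.
-/

open MeasureTheory Metric Real

theorem setIntegral_ball_pow_mul_comp_norm_eq_zero (w : ℝ → ℂ) (R : ℝ) {n : ℕ} (hn : n ≠ 0) :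
    ∫ z in ball (0 : ℂ) R, z ^ n * w ‖z‖ = 0 := by
  -- rotating by `ω = exp (iπ/n)` preserves the ball and the weight but flips the sign of `z ^ n`
  set ω : Circle := Circle.exp (π / n)
  have hωn : (ω : ℂ) ^ n = -1 := by
    have : (n : ℂ) * (↑(π / n) * Complex.I) = π * Complex.I := by
      push_cast
      field_simp
    rw [Circle.coe_exp, ← Complex.exp_nat_mul, this, Complex.exp_pi_mul_I]
  have hnorm : ∀ z, ‖(ω : ℂ) * z‖ = ‖z‖ := fun z => by rw [norm_mul, Circle.norm_coe, one_mul]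
  have hball : rotation ω ⁻¹' ball (0 : ℂ) R = ball 0 R := by
    ext z
    simp only [Set.mem_preimage, mem_ball_zero_iff, rotation_apply, hnorm]
  have hrot := (rotation ω).measurePreserving.setIntegral_preimage_emb
    (rotation ω).toHomeomorph.measurableEmbedding (fun z => z ^ n * w ‖z‖) (ball (0 : ℂ) R)
  simp only [hball, rotation_apply, hnorm, mul_pow, hωn, neg_mul, one_mul,
    integral_neg] at hrot
  linear_combination (-1 / 2 : ℂ) * hrot

theorem setIntegral_ball_comp_norm (g : ℝ → ℝ) {R : ℝ} (hR : 0 ≤ R) :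
    ∫ z in ball (0 : ℂ) R, g ‖z‖ = 2 * π * ∫ r in 0..R, r * g r := by
  have hind : (ball (0 : ℂ) R).indicator (fun z => g ‖z‖) =
      fun z => (Set.Iio R).indicator g ‖z‖ := by
    ext z
    by_cases hz : ‖z‖ < R <;> simp [Set.indicator, hz]
  rw [← integral_indicator measurableSet_ball, hind, integral_fun_norm_addHaar volume,
    Complex.finrank_real_complex, intervalIntegral.integral_of_le hR, integral_Ioc_eq_integral_Ioo,
    ← Set.Ioi_inter_Iio, ← setIntegral_indicator measurableSet_Iio]
  simp [Measure.real, Complex.volume_ball, Set.indicator_apply, mul_assoc]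

theorem setIntegral_ball_one_sub_sq_sq_div_four {R : ℝ} (hR : 0 ≤ R) :
    ∫ z in ball (0 : ℂ) R, (1 - ‖z‖ ^ 2) ^ 2 / 4 = π / 12 * (1 - (1 - R ^ 2) ^ 3) := by
  have hderiv : ∀ r ∈ Set.uIcc 0 R,
      HasDerivAt (fun r : ℝ => -(1 - r ^ 2) ^ 3 / 24) (r * ((1 - r ^ 2) ^ 2 / 4)) r := by
    intro r _
    exact ((((hasDerivAt_pow 2 r).const_sub 1).pow 3).neg.div_const 24).congr_deriv
      (by push_cast; ring)
  have hcont : Continuous fun r : ℝ => r * ((1 - r ^ 2) ^ 2 / 4) := by fun_prop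
  rw [setIntegral_ball_comp_norm (fun r => (1 - r ^ 2) ^ 2 / 4) hR,
    intervalIntegral.integral_eq_sub_of_hasDerivAt hderiv (hcont.intervalIntegrable _ _)]
  ring

theorem sq_norm_mul_integral_le_of_integral_mul_eq {α : Type*} [MeasurableSpace α]
    {μ : Measure α} {f : α → ℂ} {w : α → ℝ} {c : ℂ} (hw : 0 ≤ᵐ[μ] w)
    (hf2 : Integrable (fun x => ‖f x‖ ^ 2 * w x) μ) (hf : Integrable (fun x => f x * w x) μ)
    (hwi : Integrable w μ) (hmean : ∫ x, f x * w x ∂μ = c * (∫ x, w x ∂μ : ℝ)) :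
    ‖c‖ ^ 2 * ∫ x, w x ∂μ ≤ ∫ x, ‖f x‖ ^ 2 * w x ∂μ := by
  set g : α → ℝ := fun x => (starRingEnd ℂ c * (f x * w x)).re
  have hg : Integrable g μ := (hf.const_mul _).re
  have hexpand : ∀ x, ‖f x - c‖ ^ 2 * w x = ‖f x‖ ^ 2 * w x - 2 * g x + ‖c‖ ^ 2 * w x := by
    intro x
    simp only [g, ← Complex.normSq_eq_norm_sq, Complex.normSq_sub, Complex.mul_re,
      Complex.mul_im, Complex.conj_re, Complex.conj_im, Complex.ofReal_re, Complex.ofReal_im]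
    ring
  have hg_int : ∫ x, g x ∂μ = ‖c‖ ^ 2 * ∫ x, w x ∂μ := by
    have := integral_re (hf.const_mul (starRingEnd ℂ c))
    simp only [RCLike.re_to_complex] at this
    rw [this, integral_const_mul, hmean, ← mul_assoc, Complex.conj_mul', ← Complex.ofReal_pow,
      ← Complex.ofReal_mul, Complex.ofReal_re]
  have hvariance : 0 ≤ ∫ x, ‖f x - c‖ ^ 2 * w x ∂μ :=
    integral_nonneg_of_ae (hw.mono fun x hx => mul_nonneg (sq_nonneg _) hx)
  simp_rw [hexpand] at hvariance
  have hdiff : Integrable (fun x => ‖f x‖ ^ 2 * w x - 2 * g x) μ := hf2.sub (hg.const_mul 2)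
  rw [integral_add hdiff (hwi.const_mul _),
    integral_sub hf2 (hg.const_mul 2), integral_const_mul, integral_const_mul, hg_int] at hvariance
  linarith

theorem summable_norm_mul_pow_of_summable {𝕜 : Type*} [DenselyNormedField 𝕜] {c : ℕ → 𝕜}
    {ρ : ℝ} (hs : ∀ z : 𝕜, ‖z‖ < ρ → Summable fun n => c n * z ^ n) {r : ℝ} (hr0 : 0 ≤ r)
    (hr : r < ρ) : Summable fun n => ‖c n‖ * r ^ n := by
  obtain ⟨z, hrz, hzρ⟩ := NormedField.exists_lt_norm_lt 𝕜 hr0 hr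
  lift r to NNReal using hr0
  set p := FormalMultilinearSeries.ofScalars 𝕜 c
  have hz : (‖z‖₊ : ENNReal) ≤ p.radius := p.le_radius_of_tendsto (l := 0) <| by
    simpa [p, FormalMultilinearSeries.ofScalars_norm] using (hs z hzρ).tendsto_atTop_zero.norm
  simpa [p, FormalMultilinearSeries.ofScalars_norm] using
    p.summable_norm_mul_pow (lt_of_lt_of_le (by exact_mod_cast hrz) hz)

theorem ContinuousOn.integrableOn_ball {X E : Type*} [MetricSpace X] [ProperSpace X]
    [MeasurableSpace X] [OpensMeasurableSpace X] [NormedAddCommGroup E] {μ : Measure X}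
    [IsFiniteMeasureOnCompacts μ] {f : X → E} {x : X} {r : ℝ}
    (hf : ContinuousOn f (closedBall x r)) : IntegrableOn f (ball x r) μ :=
  (hf.integrableOn_compact (isCompact_closedBall x r)).mono_set ball_subset_closedBall

section PowerSeriesOnBall

variable {c : ℕ → ℂ} {q : ℂ → ℂ} {ρ R : ℝ}
  (hq : ∀ z : ℂ, ‖z‖ < ρ → HasSum (fun n => c n * z ^ n) (q z))
include hq

theorem continuousOn_closedBall_of_hasSum_pow (hR0 : 0 ≤ R) (hR : R < ρ) :
    ContinuousOn q (closedBall 0 R) := by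
  have hbound : ∀ n, ∀ z ∈ closedBall (0 : ℂ) R, ‖c n * z ^ n‖ ≤ ‖c n‖ * R ^ n := by
    intro n z hz
    rw [norm_mul, norm_pow]
    gcongr
    exact mem_closedBall_zero_iff.mp hz
  refine (continuousOn_tsum (fun n => by fun_prop)
    (summable_norm_mul_pow_of_summable (fun z hz => (hq z hz).summable) hR0 hR) hbound).congr ?_
  intro z hz
  exact (hq z ((mem_closedBall_zero_iff.mp hz).trans_lt hR)).tsum_eq.symm

theorem setIntegral_ball_mul_comp_norm_eq (hR0 : 0 ≤ R) (hR : R < ρ) {w : ℝ → ℂ}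
    (hw : Continuous w) :
    ∫ z in ball (0 : ℂ) R, q z * w ‖z‖ = c 0 * ∫ z in ball (0 : ℂ) R, w ‖z‖ := by
  set F : ℕ → ℂ → ℂ := fun n z => c n * z ^ n * w ‖z‖
  obtain ⟨K, hK⟩ := (isCompact_closedBall (0 : ℂ) R).exists_bound_of_continuousOn
    (f := fun z => w ‖z‖) (by fun_prop)
  have hF_int : ∀ n, IntegrableOn (F n) (ball 0 R) := fun n =>
    (by fun_prop : Continuous (F n)).continuousOn.integrableOn_ball
  have hF_le : ∀ n, ∫ z in ball (0 : ℂ) R, ‖F n z‖ ≤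
      volume.real (ball (0 : ℂ) R) * K * (‖c n‖ * R ^ n) := by
    intro n
    have hpt : ∀ z ∈ ball (0 : ℂ) R, ‖F n z‖ ≤ K * (‖c n‖ * R ^ n) := by
      intro z hz
      calc ‖F n z‖ = ‖c n‖ * ‖z‖ ^ n * ‖w ‖z‖‖ := by simp only [F, norm_mul, norm_pow]
        _ ≤ ‖c n‖ * R ^ n * K := by
          gcongr
          · exact (mem_ball_zero_iff.mp hz).le
          · exact hK z (ball_subset_closedBall hz)
        _ = K * (‖c n‖ * R ^ n) := by ring
    calc ∫ z in ball (0 : ℂ) R, ‖F n z‖ ≤ ∫ _ in ball (0 : ℂ) R, K * (‖c n‖ * R ^ n) :=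
          setIntegral_mono_on (hF_int n).norm (integrableOn_const measure_ball_lt_top.ne)
            measurableSet_ball hpt
      _ = _ := by rw [setIntegral_const, smul_eq_mul, mul_assoc]
  have hF_sum : HasSum (fun n => ∫ z in ball (0 : ℂ) R, F n z)
      (∫ z in ball (0 : ℂ) R, q z * w ‖z‖) := by
    rw [← setIntegral_congr_fun measurableSet_ball fun z hz =>
      ((hq z ((mem_ball_zero_iff.mp hz).trans hR)).mul_right (w ‖z‖)).tsum_eq]
    refine hasSum_integral_of_summable_integral_norm hF_int ?_
    exact .of_nonneg_of_le (fun n => integral_nonneg fun _ => norm_nonneg _) hF_le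
      ((summable_norm_mul_pow_of_summable (fun z hz => (hq z hz).summable) hR0 hR).mul_left _)
  have hF_single : HasSum (fun n => ∫ z in ball (0 : ℂ) R, F n z)
      (c 0 * ∫ z in ball (0 : ℂ) R, w ‖z‖) := by
    convert hasSum_single 0 fun n hn => ?_
    · simp [F, integral_const_mul]
    · simp only [F, mul_assoc, integral_const_mul,
        setIntegral_ball_pow_mul_comp_norm_eq_zero w R hn, mul_zero]
  exact hF_sum.unique hF_single

end PowerSeriesOnBall

/-- If `q` is holomorphic on the unit disc with Taylor expansion
`q(z) = Σ_{n≥2} (n³ - n) aₙ z^{n-2}`, then for any `R ∈ (0,1)`,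
`∫∫_{|z|<R} |q(z)|² (1-|z|²)²/4 d²z ≥ (4π/3) |3 a₂ / 2|² (1 - (1 - R²)³)`. -/
theorem stmt_5 (q : ℂ → ℂ) (a : ℕ → ℂ)
    (hq : ∀ z : ℂ, ‖z‖ < 1 →
      HasSum (fun n : ℕ => ((((n : ℂ) + 2) ^ 3 - ((n : ℂ) + 2)) * a (n + 2)) * z ^ n) (q z))
    (R : ℝ) (hR : R ∈ Set.Ioo (0:ℝ) 1) :
    (4 * Real.pi / 3) * ‖3 * a 2 / 2‖ ^ 2 * (1 - (1 - R ^ 2) ^ 3) ≤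
      ∫ z in Metric.ball (0:ℂ) R,
        ‖q z‖ ^ 2 * (1 - ‖z‖ ^ 2) ^ 2 / 4 := by
  obtain ⟨hR0, hR1⟩ := hR
  set w : ℂ → ℝ := fun z => (1 - ‖z‖ ^ 2) ^ 2 / 4
  have hqc := continuousOn_closedBall_of_hasSum_pow hq hR0.le hR1
  have hmean := setIntegral_ball_mul_comp_norm_eq hq hR0.le hR1
    (w := fun r => (((1 - r ^ 2) ^ 2 / 4 : ℝ) : ℂ)) (by fun_prop)
  beta_reduce at hmean
  rw [integral_complex_ofReal] at hmean
  have hvar := sq_norm_mul_integral_le_of_integral_mul_eq (w := w)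
    (ae_of_all _ fun z => by positivity) ((hqc.norm.pow 2).mul (by fun_prop)).integrableOn_ball
    (hqc.mul (by fun_prop)).integrableOn_ball
    (by fun_prop : Continuous w).continuousOn.integrableOn_ball hmean
  rw [setIntegral_ball_one_sub_sq_sq_div_four hR0.le] at hvar
  convert hvar using 1
  · norm_num
    ring
  · simp only [w, mul_div_assoc]
end
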